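/- arXiv:1711.03856 — 5 statements merged into one kernel-verified Lean document; each statement's English description precedes it below -/
import Mathlib

section
/- For every fixed integer k ≥ 4, the sequence (χρ(S^n_k))_{n ∈ ℕ} of packing chromatic numbers of the Sierpiński graphs of base k is unbounded from above; that is, for every M there exists n such that χρ(S^n_k) > M. -/
/-- The generalized Sierpiński graph `S^n_G` of a base graph `G` on the vertex set
`[k]_0 = {0, …, k−1}`: the vertices are the words of length `n` over `[k]_0`, and two
distinct words `u, v` are adjacent iff there is an index `i` with `u j = v j` for `j < i`,
`u i` adjacent to `v i` in `G`, and `u j = v i`, `v j = u i` for all `j > i`. -/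
def genSierpinski {k : ℕ} (G : SimpleGraph (Fin k)) (n : ℕ) :
    SimpleGraph (Fin n → Fin k) where
  Adj u v := ∃ i : Fin n,
    (∀ j, j < i → u j = v j) ∧ G.Adj (u i) (v i) ∧ ∀ j, i < j → u j = v i ∧ v j = u i
  symm := by
    constructor
    rintro u v ⟨i, h1, h2, h3⟩
    exact ⟨i, fun j hj => (h1 j hj).symm, h2.symm, fun j hj => ⟨(h3 j hj).2, (h3 j hj).1⟩⟩
  loopless := by
    constructor
    rintro u ⟨i, -, h2, -⟩
    exact G.irrefl h2

/-- The Sierpiński graph `S^n_k`, i.e. the generalized Sierpiński graph of the complete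
graph `K_k` on `[k]_0` (in which two vertices are adjacent iff they are distinct). -/
def sierpinski (k n : ℕ) : SimpleGraph (Fin n → Fin k) :=
  genSierpinski (⊤ : SimpleGraph (Fin k)) n

/-- `c` is a `t`-packing coloring of `G`: every vertex gets a color in `{1, …, t}`, and any
two distinct vertices with the same color `i` are at distance greater than `i`
(equivalently, every walk between them has length greater than `i`). -/
def IsPackingColoring {V : Type*} (G : SimpleGraph V) (t : ℕ) (c : V → ℕ) : Prop :=
  (∀ v, 1 ≤ c v ∧ c v ≤ t) ∧
    ∀ u v, u ≠ v → c u = c v → ∀ p : G.Walk u v, c u < p.length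

/-- The packing chromatic number `χρ(G)`: the least `t` such that `G` admits a
`t`-packing coloring. -/
noncomputable def packingChromatic {V : Type*} (G : SimpleGraph V) : ℕ :=
  sInf {t | ∃ c : V → ℕ, IsPackingColoring G t c}

/-!
Two words of `S^n_k` sharing their first `n - m` letters lie in a common copy of `S^m_k`,
whose diameter is `2^m - 1`; hence a colour class `i ≥ 2^m - 1` meets each such copy at most
once and has at most `k^(n-m)` vertices. The `2^m` colours in `[2^m - 1, 2^(m+1) - 1)` thus
cover at most `2^m k^(n-m)` vertices, and since `k ≥ 4` an induction on `m` shows that at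
least `2^(m+1) k^(n-m)` vertices receive a colour `≥ 2^m - 1`. For `m = n` some colour is
`≥ 2^n - 1`, so `χρ(S^n_k) ≥ 2^n - 1`.
-/

open Finset

namespace IsPackingColoring

variable {V : Type*} {G : SimpleGraph V} {t : ℕ} {c : V → ℕ}

theorem eq_of_walk_length_le (hc : IsPackingColoring G t c) {u v : V} (huv : c u = c v)
    (p : G.Walk u v) (hp : p.length ≤ c u) : u = v := by
  by_contra h
  exact (hc.2 u v h huv p).not_ge hp

end IsPackingColoring

theorem exists_isPackingColoring {V : Type*} [Fintype V] (G : SimpleGraph V) :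
    ∃ c, IsPackingColoring G (Fintype.card V) c := by
  refine ⟨fun v => Fintype.equivFin V v + 1,
    fun v => ⟨Nat.le_add_left 1 _, (Fintype.equivFin V v).isLt⟩,
    fun u v huv hc => absurd ((Fintype.equivFin V).injective (Fin.ext ?_)) huv⟩
  simpa using hc

theorem le_packingChromatic {V : Type*} [Fintype V] {G : SimpleGraph V} {N : ℕ}
    (h : ∀ t c, IsPackingColoring G t c → N ≤ t) : N ≤ packingChromatic G :=
  le_csInf ⟨_, exists_isPackingColoring G⟩ fun t ⟨c, hc⟩ => h t c hc

namespace sierpinski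

variable {k n : ℕ}

theorem adj_iff {u v : Fin n → Fin k} :
    (sierpinski k n).Adj u v ↔ ∃ i : Fin n,
      (∀ j, j < i → u j = v j) ∧ u i ≠ v i ∧ ∀ j, i < j → u j = v i ∧ v j = u i := by
  simp [sierpinski, genSierpinski]

theorem exists_walk_length_le (m : ℕ) {u v : Fin n → Fin k}
    (h : ∀ l : Fin n, (l : ℕ) < n - m → u l = v l) :
    ∃ p : (sierpinski k n).Walk u v, p.length ≤ 2 ^ m - 1 := by
  induction m generalizing u v with
  | zero =>
    obtain rfl : u = v := funext fun l => h l (by omega)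
    exact ⟨.nil, le_rfl⟩
  | succ m ih =>
    have hpow : 2 ^ (m + 1) = 2 ^ m + 2 ^ m := by ring
    by_cases hagree : ∀ l : Fin n, (l : ℕ) < n - m → u l = v l
    · obtain ⟨p, hp⟩ := ih hagree
      exact ⟨p, by omega⟩
    push Not at hagree
    obtain ⟨j, hjm, hj⟩ := hagree
    have hj_eq : (j : ℕ) = n - (m + 1) := by
      by_contra hne
      exact hj (h j (by omega))
    -- `u'` and `v'` are the extreme vertices by which the copies of `u` and `v` are joined.
    let u' : Fin n → Fin k := fun l => if l ≤ j then u l else v j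
    let v' : Fin n → Fin k := fun l => if l ≤ j then v l else u j
    have hlow {l : Fin n} (hl : (l : ℕ) < n - m) : l ≤ j := by
      rw [Fin.le_def]
      omega
    obtain ⟨p, hp⟩ : ∃ p : (sierpinski k n).Walk u u', p.length ≤ 2 ^ m - 1 :=
      ih fun l hl => by simp [u', hlow hl]
    obtain ⟨q, hq⟩ : ∃ q : (sierpinski k n).Walk v' v, q.length ≤ 2 ^ m - 1 :=
      ih fun l hl => by simp [v', hlow hl]
    have hcross : (sierpinski k n).Adj u' v' := by
      refine adj_iff.2 ⟨j, fun l hl => ?_, by simpa [u', v'] using hj, fun l hl => ?_⟩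
      · simpa [u', v', hl.le] using h l (by rw [Fin.lt_def] at hl; omega)
      · simp [u', v', not_le.2 hl]
    refine ⟨p.append (.cons hcross q), ?_⟩
    simp only [SimpleGraph.Walk.length_append, SimpleGraph.Walk.length_cons]
    have := Nat.one_le_two_pow (n := m)
    omega

variable {t : ℕ} {c : (Fin n → Fin k) → ℕ}

theorem card_filter_color_mem_le (hc : IsPackingColoring (sierpinski k n) t c) {m : ℕ}
    {s : Finset ℕ} (hs : ∀ i ∈ s, 2 ^ m - 1 ≤ i) :
    #{v | c v ∈ s} ≤ k ^ (n - m) * #s := by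
  let prefixAndColor (v : Fin n → Fin k) : (Fin (n - m) → Fin k) × ℕ :=
    (fun l => v (Fin.castLE (Nat.sub_le n m) l), c v)
  have hinj : Set.InjOn prefixAndColor {v | c v ∈ s} := by
    intro u hu v _ huv
    simp only [prefixAndColor, Prod.mk.injEq] at huv
    obtain ⟨p, hp⟩ := exists_walk_length_le m (u := u) (v := v) fun l hl =>
      congrFun huv.1 ⟨l, hl⟩
    exact hc.eq_of_walk_length_le huv.2 p (hp.trans (hs _ (by simpa using hu)))
  calc #{v | c v ∈ s} ≤ #(univ ×ˢ s) :=
        card_le_card_of_injOn prefixAndColor (fun v hv => by simpa [prefixAndColor] using hv)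
          (by simpa using hinj)
    _ = k ^ (n - m) * #s := by simp

theorem le_card_filter_two_pow_sub_one_le (hk : 4 ≤ k) (hc : IsPackingColoring (sierpinski k n) t c)
    {m : ℕ} (hm : 1 ≤ m) (hmn : m ≤ n) :
    2 ^ (m + 1) * k ^ (n - m) ≤ #{v | 2 ^ m - 1 ≤ c v} := by
  induction m, hm using Nat.le_induction with
  | base =>
    have hall : #{v | 2 ^ 1 - 1 ≤ c v} = k ^ n := by
      simp [filter_true_of_mem fun v _ => (hc.1 v).1]
    rw [hall, ← pow_sub_one_mul (by omega : n ≠ 0)]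
    calc 2 ^ (1 + 1) * k ^ (n - 1) = k ^ (n - 1) * 4 := by ring
      _ ≤ k ^ (n - 1) * k := Nat.mul_le_mul_left _ hk
  | succ m hm ih =>
    have hsplit : #{v | 2 ^ m - 1 ≤ c v} ≤
        #{v | 2 ^ (m + 1) - 1 ≤ c v} + #{v | c v ∈ Ico (2 ^ m - 1) (2 ^ (m + 1) - 1)} := by
      refine (card_le_card fun v => ?_).trans (card_union_le _ _)
      simp only [mem_filter, mem_union, mem_univ, true_and, mem_Ico]
      omega
    have hmid := card_filter_color_mem_le hc (m := m) (s := Ico (2 ^ m - 1) (2 ^ (m + 1) - 1))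
      fun i hi => (mem_Ico.1 hi).1
    have hblock : #(Ico (2 ^ m - 1) (2 ^ (m + 1) - 1)) = 2 ^ m := by
      rw [Nat.card_Ico, pow_succ]
      have := Nat.one_le_two_pow (n := m)
      omega
    have hk_pow : k ^ (n - m) = k ^ (n - (m + 1)) * k := by
      rw [← pow_succ]
      congr 1
      omega
    have hstep : 2 ^ (m + 1 + 1) * k ^ (n - (m + 1)) ≤ 2 ^ m * k ^ (n - m) := by
      rw [hk_pow]
      calc 2 ^ (m + 1 + 1) * k ^ (n - (m + 1)) = 2 ^ m * (k ^ (n - (m + 1)) * 4) := by ring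
        _ ≤ 2 ^ m * (k ^ (n - (m + 1)) * k) := by gcongr
    have hdouble : 2 ^ (m + 1) * k ^ (n - m) = 2 ^ m * k ^ (n - m) + 2 ^ m * k ^ (n - m) := by
      ring
    have := ih (by omega)
    rw [hblock] at hmid
    linarith

theorem two_pow_sub_one_le (hk : 4 ≤ k) (hc : IsPackingColoring (sierpinski k n) t c) :
    2 ^ n - 1 ≤ t := by
  rcases Nat.eq_zero_or_pos n with rfl | hn
  · simp
  have hcard := le_card_filter_two_pow_sub_one_le hk hc hn le_rfl
  obtain ⟨v, hv⟩ : ({v | 2 ^ n - 1 ≤ c v} : Finset _).Nonempty := by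
    rw [← card_pos]
    have := Nat.one_le_two_pow (n := n + 1)
    simp only [Nat.sub_self, pow_zero, mul_one] at hcard
    omega
  exact (mem_filter.1 hv).2.trans (hc.1 v).2

end sierpinski

theorem two_pow_sub_one_le_packingChromatic_sierpinski {k : ℕ} (hk : 4 ≤ k) (n : ℕ) :
    2 ^ n - 1 ≤ packingChromatic (sierpinski k n) :=
  le_packingChromatic fun _ _ hc => sierpinski.two_pow_sub_one_le hk hc

/-- For every fixed `k ≥ 4`, the sequence `(χρ(S^n_k))_{n ∈ ℕ}` is unbounded from above:
for every `M` there exists `n` with `χρ(S^n_k) > M`. -/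
theorem packingChromatic_sierpinski_unbounded (k : ℕ) (hk : 4 ≤ k) (M : ℕ) :
    ∃ n : ℕ, 1 ≤ n ∧ M < packingChromatic (sierpinski k n) := by
  refine ⟨M + 1, by omega, lt_of_lt_of_le ?_ (two_pow_sub_one_le_packingChromatic_sierpinski hk _)⟩
  have := Nat.lt_two_pow_self (n := M)
  rw [pow_succ]
  omega
end

section
/- For all integers k ≥ 2 and n ≥ 1, the diameter of the Sierpiński graph S^n_k equals 2^n − 1. -/
/-!
Write `c^n` for a constant word. The words of `S^(n+1)_k` beginning with `a` form a copy `aS^n_k`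
of `S^n_k`, and two copies `aS^n_k`, `bS^n_k` are joined by the single edge `a b^n ~ b a^n`.
Routing through that edge gives `d(u, v) ≤ 2^n - 1` by induction on `n`. For the lower bound,
`w ↦ ∑_j [w_j ≠ c] 2^(n-1-j)` changes by at most one along an edge: inside a copy this is
induction, and across `a b^n ~ b a^n` the two values differ by `[a ≠ c] - [b ≠ c]`. It vanishes
at `c^n` and equals `2^n - 1` at every other constant word.
-/

namespace SimpleGraph

variable {V W : Type*} {G : SimpleGraph V} {H : SimpleGraph W}

theorem Hom.edist_map_le (f : G →g H) (u v : V) : H.edist (f u) (f v) ≤ G.edist u v := by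
  by_cases hr : G.Reachable u v
  · obtain ⟨p, hp⟩ := hr.exists_walk_length_eq_edist
    rw [← hp, ← p.length_map f]
    exact edist_le _
  · simp [edist_eq_top_of_not_reachable hr]

theorem le_add_edist_of_forall_adj {f : V → ℕ} (hf : ∀ ⦃u v⦄, G.Adj u v → f u ≤ f v + 1)
    (u v : V) : (f u : ℕ∞) ≤ f v + G.edist u v := by
  have walk_bound : ∀ {u v : V} (p : G.Walk u v), f u ≤ f v + p.length := by
    intro u v p
    induction p with
    | nil => simp
    | cons h _ ih => rw [Walk.length_cons]; have := hf h; omega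
  by_cases hr : G.Reachable u v
  · obtain ⟨p, hp⟩ := hr.exists_walk_length_eq_edist
    rw [← hp]
    exact_mod_cast walk_bound p
  · simp [edist_eq_top_of_not_reachable hr]

end SimpleGraph

namespace genSierpinski

variable {k n : ℕ} {G : SimpleGraph (Fin k)}

theorem adj_cons_cons {a b : Fin k} {u v : Fin n → Fin k} :
    (genSierpinski G (n + 1)).Adj (Fin.cons a u) (Fin.cons b v) ↔
      (a = b ∧ (genSierpinski G n).Adj u v) ∨
        (G.Adj a b ∧ u = (fun _ => b) ∧ v = fun _ => a) := by
  constructor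
  · rintro ⟨i, hlt, hadj, hgt⟩
    induction i using Fin.cases with
    | zero =>
      refine Or.inr ⟨by simpa using hadj, funext fun j => ?_, funext fun j => ?_⟩
      · simpa using (hgt j.succ j.succ_pos).1
      · simpa using (hgt j.succ j.succ_pos).2
    | succ i =>
      refine Or.inl ⟨by simpa using hlt 0 i.succ_pos, i, fun j hj => ?_, by simpa using hadj,
        fun j hj => ?_⟩
      · simpa using hlt j.succ (Fin.succ_lt_succ_iff.mpr hj)
      · simpa using hgt j.succ (Fin.succ_lt_succ_iff.mpr hj)
  · rintro (⟨rfl, i, hlt, hadj, hgt⟩ | ⟨hab, rfl, rfl⟩)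
    · refine ⟨i.succ, fun j hj => ?_, by simpa using hadj, fun j hj => ?_⟩
      · induction j using Fin.cases with
        | zero => rfl
        | succ j => simpa using hlt j (Fin.succ_lt_succ_iff.mp hj)
      · induction j using Fin.cases with
        | zero => exact absurd hj (Fin.not_lt_zero _)
        | succ j => simpa using hgt j (Fin.succ_lt_succ_iff.mp hj)
    · refine ⟨0, fun j hj => absurd hj (Fin.not_lt_zero _), by simpa using hab, fun j hj => ?_⟩
      induction j using Fin.cases with
      | zero => exact absurd hj (lt_irrefl _)
      | succ j => simp

variable (G) in
def consHom (a : Fin k) : genSierpinski G n →g genSierpinski G (n + 1) where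
  toFun w := Fin.cons a w
  map_rel' h := adj_cons_cons.2 (Or.inl ⟨rfl, h⟩)

theorem edist_cons_cons_le (a : Fin k) (u v : Fin n → Fin k) :
    (genSierpinski G (n + 1)).edist (Fin.cons a u) (Fin.cons a v) ≤
      (genSierpinski G n).edist u v :=
  (consHom G a).edist_map_le u v

/-- `∑_j [w_j ≠ c] 2^(n-1-j)`, in fact the distance from `w` to the extreme vertex `c^n`. -/
def weight (c : Fin k) : {n : ℕ} → (Fin n → Fin k) → ℕ
  | 0, _ => 0
  | n + 1, w => (if w 0 = c then 0 else 2 ^ n) + weight c (Fin.tail w)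

@[simp]
theorem weight_cons (c a : Fin k) (w : Fin n → Fin k) :
    weight c (Fin.cons a w) = (if a = c then 0 else 2 ^ n) + weight c w := by
  simp [weight]

theorem weight_const (c b : Fin k) :
    weight c (fun _ : Fin n => b) = if b = c then 0 else 2 ^ n - 1 := by
  induction n with
  | zero => simp [weight]
  | succ n ih =>
    change (if b = c then 0 else 2 ^ n) + weight c (fun _ : Fin n => b) = _
    rw [ih]
    have := Nat.one_le_two_pow (n := n)
    split_ifs <;> omega

theorem weight_le_weight_add_one (c : Fin k) {u v : Fin n → Fin k}
    (h : (genSierpinski G n).Adj u v) : weight c u ≤ weight c v + 1 := by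
  induction n with
  | zero => simp [weight]
  | succ n ih =>
    induction u using Fin.consCases with | cons a u =>
    induction v using Fin.consCases with | cons b v =>
    rcases adj_cons_cons.1 h with ⟨rfl, htail⟩ | ⟨-, rfl, rfl⟩
    · simpa only [weight_cons, add_assoc, add_le_add_iff_left] using ih htail
    · simp only [weight_cons, weight_const]
      have := Nat.one_le_two_pow (n := n)
      split_ifs <;> omega

theorem weight_le_edist (c : Fin k) (u v : Fin n → Fin k) :
    (weight c u : ℕ∞) ≤ weight c v + (genSierpinski G n).edist u v :=
  SimpleGraph.le_add_edist_of_forall_adj (fun _ _ => weight_le_weight_add_one c) u v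

end genSierpinski

namespace sierpinski

open genSierpinski

variable {k n : ℕ}

theorem edist_add_one_le (u v : Fin n → Fin k) : (sierpinski k n).edist u v + 1 ≤ 2 ^ n := by
  induction n with
  | zero => simp [Subsingleton.elim u v]
  | succ n ih =>
    induction u using Fin.consCases with | cons a u =>
    induction v using Fin.consCases with | cons b v =>
    by_cases hab : a = b
    · subst hab
      calc (sierpinski k (n + 1)).edist (Fin.cons a u) (Fin.cons a v) + 1
          ≤ (sierpinski k n).edist u v + 1 := by gcongr; exact edist_cons_cons_le a u v
        _ ≤ 2 ^ n := ih u v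
        _ ≤ 2 ^ (n + 1) := pow_le_pow_right₀ one_le_two n.le_succ
    · have bridge : (sierpinski k (n + 1)).Adj (Fin.cons a fun _ => b) (Fin.cons b fun _ => a) :=
        adj_cons_cons.2 (Or.inr ⟨hab, rfl, rfl⟩)
      calc (sierpinski k (n + 1)).edist (Fin.cons a u) (Fin.cons b v) + 1
          ≤ (sierpinski k (n + 1)).edist (Fin.cons a u) (Fin.cons a fun _ => b) + 1 +
              (sierpinski k (n + 1)).edist (Fin.cons b fun _ => a) (Fin.cons b v) + 1 := by
            gcongr
            rw [← SimpleGraph.edist_eq_one_iff_adj.2 bridge]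
            exact SimpleGraph.edist_triangle.trans (add_le_add SimpleGraph.edist_triangle le_rfl)
        _ ≤ (sierpinski k n).edist u (fun _ => b) + 1 +
              ((sierpinski k n).edist (fun _ => a) v + 1) := by
            rw [add_assoc _ _ 1]
            gcongr <;> exact edist_cons_cons_le _ _ _
        _ ≤ 2 ^ n + 2 ^ n := add_le_add (ih _ _) (ih _ _)
        _ = 2 ^ (n + 1) := by ring

theorem edist_le (u v : Fin n → Fin k) : (sierpinski k n).edist u v ≤ (2 ^ n - 1 : ℕ) := by
  have h := edist_add_one_le u v
  lift (sierpinski k n).edist u v to ℕ using ne_top_of_lt ((ENat.add_one_le_iff' (by simp)).1 h)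
    with d
  norm_cast at h ⊢
  omega

theorem le_edist_const_const {a b : Fin k} (hab : a ≠ b) :
    ((2 ^ n - 1 : ℕ) : ℕ∞) ≤ (sierpinski k n).edist (fun _ => a) (fun _ => b) := by
  have h := weight_le_edist (G := ⊤) b (fun _ : Fin n => a) (fun _ => b)
  rwa [weight_const, weight_const, if_neg hab, if_pos rfl, Nat.cast_zero, zero_add] at h

end sierpinski

theorem diam_sierpinski_general (k n : ℕ) (hk : 2 ≤ k) :
    (sierpinski k n).diam = 2 ^ n - 1 := by
  suffices (sierpinski k n).ediam = ((2 ^ n - 1 : ℕ) : ℕ∞) by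
    rw [SimpleGraph.diam, this, ENat.toNat_natCast]
  have hab : (⟨0, by omega⟩ : Fin k) ≠ ⟨1, by omega⟩ := by simp
  exact le_antisymm (SimpleGraph.ediam_le_of_edist_le sierpinski.edist_le)
    ((sierpinski.le_edist_const_const hab).trans SimpleGraph.edist_le_ediam)

/-- For all `k ≥ 2` and `n ≥ 1`, the diameter of the Sierpiński graph `S^n_k`
equals `2^n − 1`. -/
theorem diam_sierpinski (k n : ℕ) (hk : 2 ≤ k) (hn : 1 ≤ n) :
    (sierpinski k n).diam = 2 ^ n - 1 :=
  diam_sierpinski_general k n hk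
end

section
/- For all integers k ≥ 2 and n ≥ 1, the packing chromatic numbers of consecutive Sierpiński graphs satisfy χρ(S^{n+1}_k) ≥ χρ(S^n_k) + (k − 1)·(χρ(S^n_k) − 2^{n+1} + 2) (equivalently, χρ(S^{n+1}_k) ≥ k·χρ(S^n_k) − (k − 1)·(2^{n+1} − 2)). -/
/-!
Let `c` be an optimal packing coloring of `S^{n+1}_k` and `L = 2^{n+1} - 2`. On each of the `k`
copies `aS^n_k` of `S^n_k`, whose diameter is `2^n - 1`, every color above `2^n - 2` is used at
most once; recoloring those vertices with fresh colors shows that `χρ(S^n_k)` is at most `L` plus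
the number of vertices of `aS^n_k` colored above `L`. Since `S^{n+1}_k` has diameter `2^{n+1} - 1`,
a color above `L` is used at most once in the whole graph, so summing over the copies gives
`k χρ(S^n_k) ≤ k L + (χρ(S^{n+1}_k) - L)`.
-/

open Finset

namespace IsPackingColoring

variable {V W : Type*} {G : SimpleGraph V} {H : SimpleGraph W} {t : ℕ} {c : V → ℕ}

lemma comap (hc : IsPackingColoring G t c) (f : H →g G) (hf : Function.Injective f) :
    IsPackingColoring H t (c ∘ f) :=
  ⟨fun v => hc.1 (f v), fun u v huv heq p => by
    simpa using hc.2 _ _ (hf.ne huv) heq (p.map f)⟩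

lemma packingChromatic_le (hc : IsPackingColoring G t c) : packingChromatic G ≤ t :=
  Nat.sInf_le ⟨c, hc⟩

lemma eq_of_length_le (hc : IsPackingColoring G t c) {u v : V} (heq : c u = c v)
    (p : G.Walk u v) (hp : p.length ≤ c u) : u = v := by
  by_contra huv
  exact (hc.2 u v huv heq p).not_ge hp

variable [Fintype V]

/-- Giving each vertex of color above `s` a fresh color of its own keeps the coloring
a packing coloring. -/
lemma packingChromatic_le_add_card (hc : IsPackingColoring G t c) (s : ℕ) :
    packingChromatic G ≤ s + #{v | s < c v} := by
  classical
  set big : Finset V := {v | s < c v}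
  have mem_big (v : V) : v ∈ big ↔ s < c v := by simp [big]
  let e : big ≃ Fin #big := big.equivFin
  let c' : V → ℕ := fun v => if hv : v ∈ big then s + 1 + e ⟨v, hv⟩ else c v
  refine IsPackingColoring.packingChromatic_le (c := c') ⟨fun v => ?_, fun u v huv heq p => ?_⟩
  · by_cases hv : v ∈ big
    · simp only [c', dif_pos hv]
      have := (e ⟨v, hv⟩).isLt
      omega
    · simp only [c', dif_neg hv]
      have := (hc.1 v).1
      have := (mem_big v).not.1 hv
      omega
  · by_cases hu : u ∈ big <;> by_cases hv : v ∈ big <;>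
      simp only [c', dif_pos, dif_neg, hu, hv, not_false_eq_true] at heq ⊢
    · have : e ⟨u, hu⟩ = e ⟨v, hv⟩ := Fin.ext (by omega)
      exact absurd (congrArg Subtype.val (e.injective this)) huv
    · have := (mem_big v).not.1 hv
      omega
    · have := (mem_big u).not.1 hu
      omega
    · exact hc.2 u v huv heq p

lemma card_filter_lt_and_le_le_sub (hc : IsPackingColoring G t c) {s : ℕ}
    (hdiam : ∀ u v, ∃ p : G.Walk u v, p.length ≤ s + 1) (L : ℕ) :
    #{v | s < c v ∧ c v ≤ L} ≤ L - s := by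
  calc #{v | s < c v ∧ c v ≤ L} ≤ #(Ioc s L) := by
        refine card_le_card_of_injOn c (fun v hv => by simpa using hv) fun u hu v hv heq => ?_
        obtain ⟨p, hp⟩ := hdiam u v
        simp only [coe_filter, mem_univ, true_and, Set.mem_ofPred_eq] at hu
        exact hc.eq_of_length_le heq p (by omega)
    _ = L - s := Nat.card_Ioc s L

end IsPackingColoring

lemma exists_isPackingColoring_packingChromatic {V : Type*} [Finite V] (G : SimpleGraph V) :
    ∃ c, IsPackingColoring G (packingChromatic G) c := by
  have := Fintype.ofFinite V
  refine Nat.sInf_mem (s := {t | ∃ c, IsPackingColoring G t c}) ⟨Fintype.card V,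
    fun v => Fintype.equivFin V v + 1, fun v => ?_, fun u v huv heq => ?_⟩
  · have := (Fintype.equivFin V v).isLt
    dsimp only
    omega
  · exact absurd ((Fintype.equivFin V).injective (Fin.ext (by simpa using heq))) huv

lemma card_filter_fin_succ {β : Type*} [Fintype β] {n : ℕ} (P : (Fin (n + 1) → β) → Prop)
    [DecidablePred P] : #{v | P v} = ∑ a, #{u : Fin n → β | P (Fin.cons a u)} := by
  simp only [card_filter]
  rw [← Fintype.sum_equiv (Fin.consEquiv fun _ => β) _ _ (fun _ => rfl), Fintype.sum_prod_type]
  rfl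

section Sierpinski

variable {k n : ℕ}

lemma sierpinski_adj {u v : Fin n → Fin k} :
    (sierpinski k n).Adj u v ↔ ∃ i : Fin n,
      (∀ j, j < i → u j = v j) ∧ u i ≠ v i ∧ ∀ j, i < j → u j = v i ∧ v j = u i := by
  simp only [sierpinski, genSierpinski, SimpleGraph.top_adj]

/-- The copy `aS^n_k` of `S^n_k` inside `S^{n+1}_k`. -/
def sierpinskiCons (a : Fin k) (n : ℕ) : sierpinski k n →g sierpinski k (n + 1) where
  toFun u := Fin.cons a u
  map_rel' {u v} h := by
    obtain ⟨i, hlt, hne, hgt⟩ := sierpinski_adj.1 h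
    refine sierpinski_adj.2 ⟨i.succ, Fin.cases (by simp) fun j hj => ?_, by simpa using hne,
      Fin.cases (by simp) fun j hj => ?_⟩
    · simpa using hlt j (Fin.succ_lt_succ_iff.1 hj)
    · simpa using hgt j (Fin.succ_lt_succ_iff.1 hj)

@[simp]
lemma sierpinskiCons_apply (a : Fin k) (u : Fin n → Fin k) :
    sierpinskiCons a n u = Fin.cons a u :=
  rfl

lemma sierpinskiCons_injective (a : Fin k) : Function.Injective (sierpinskiCons a n) :=
  Fin.cons_right_injective (α := fun _ => Fin k) a

def sierpinskiConsWalk (a : Fin k) {u v : Fin n → Fin k} (p : (sierpinski k n).Walk u v) :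
    (sierpinski k (n + 1)).Walk (Fin.cons a u) (Fin.cons a v) :=
  (p.map (sierpinskiCons a n)).copy (sierpinskiCons_apply a u) (sierpinskiCons_apply a v)

@[simp]
lemma length_sierpinskiConsWalk (a : Fin k) {u v : Fin n → Fin k}
    (p : (sierpinski k n).Walk u v) : (sierpinskiConsWalk a p).length = p.length := by
  rw [sierpinskiConsWalk, SimpleGraph.Walk.length_copy, SimpleGraph.Walk.length_map]

lemma sierpinski_adj_cons_const {a b : Fin k} (hab : a ≠ b) :
    (sierpinski k (n + 1)).Adj (Fin.cons a fun _ => b) (Fin.cons b fun _ => a) :=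
  sierpinski_adj.2 ⟨0, fun j hj => absurd hj (Fin.not_lt_zero j), by simpa using hab,
    Fin.cases (by simp) fun j _ => by simp⟩

lemma sierpinski_exists_walk_length_lt_two_pow (u v : Fin n → Fin k) :
    ∃ p : (sierpinski k n).Walk u v, p.length < 2 ^ n := by
  induction n with
  | zero => exact ⟨.copy .nil rfl (Subsingleton.elim u v), by simp⟩
  | succ n ih =>
    obtain ⟨a, u, rfl⟩ : ∃ a u', u = Fin.cons a u' := ⟨_, _, (Fin.cons_self_tail u).symm⟩
    obtain ⟨b, v, rfl⟩ : ∃ b v', v = Fin.cons b v' := ⟨_, _, (Fin.cons_self_tail v).symm⟩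
    by_cases hab : a = b
    · subst hab
      obtain ⟨p, hp⟩ := ih u v
      refine ⟨sierpinskiConsWalk a p, ?_⟩
      rw [length_sierpinskiConsWalk, pow_succ]
      omega
    · obtain ⟨p, hp⟩ := ih u fun _ => b
      obtain ⟨q, hq⟩ := ih (fun _ => a) v
      refine ⟨(sierpinskiConsWalk a p).append
        (.cons (sierpinski_adj_cons_const hab) (sierpinskiConsWalk b q)), ?_⟩
      rw [SimpleGraph.Walk.length_append, SimpleGraph.Walk.length_cons,
        length_sierpinskiConsWalk, length_sierpinskiConsWalk, pow_succ]
      omega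

end Sierpinski

namespace IsPackingColoring

variable {k n t : ℕ}

/-- Colors above `2^n - 2` are used at most once in `S^n_k`, whose diameter is `2^n - 1`;
those up to `2^{n+1} - 2` therefore occupy at most `2^n` vertices. -/
lemma packingChromatic_sierpinski_le {c : (Fin n → Fin k) → ℕ}
    (hc : IsPackingColoring (sierpinski k n) t c) :
    packingChromatic (sierpinski k n) ≤ 2 ^ (n + 1) - 2 + #{u | 2 ^ (n + 1) - 2 < c u} := by
  set L := 2 ^ (n + 1) - 2
  set s := 2 ^ n - 2
  have hdiam (u v : Fin n → Fin k) : ∃ p : (sierpinski k n).Walk u v, p.length ≤ s + 1 := by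
    obtain ⟨p, hp⟩ := sierpinski_exists_walk_length_lt_two_pow u v
    exact ⟨p, by omega⟩
  have hsL : s + (L - s) = L := by
    have : 2 ^ n ≤ 2 ^ (n + 1) := Nat.pow_le_pow_right two_pos n.le_succ
    omega
  calc packingChromatic (sierpinski k n) ≤ s + #{u | s < c u} :=
        hc.packingChromatic_le_add_card s
    _ ≤ s + (#{u | s < c u ∧ c u ≤ L} + #{u | L < c u}) := by
        gcongr
        refine (card_le_card fun u hu => ?_).trans (card_union_le _ _)
        simp only [mem_filter, mem_univ, true_and, mem_union] at hu ⊢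
        omega
    _ ≤ s + ((L - s) + #{u | L < c u}) := by
        gcongr
        exact hc.card_filter_lt_and_le_le_sub hdiam L
    _ = L + #{u | L < c u} := by rw [← add_assoc, hsL]

lemma mul_packingChromatic_sierpinski_le {c : (Fin (n + 1) → Fin k) → ℕ}
    (hc : IsPackingColoring (sierpinski k (n + 1)) t c) :
    k * packingChromatic (sierpinski k n) ≤ k * (2 ^ (n + 1) - 2) + (t - (2 ^ (n + 1) - 2)) := by
  set L := 2 ^ (n + 1) - 2
  have hdiam (u v : Fin (n + 1) → Fin k) :
      ∃ p : (sierpinski k (n + 1)).Walk u v, p.length ≤ L + 1 := by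
    obtain ⟨p, hp⟩ := sierpinski_exists_walk_length_lt_two_pow u v
    exact ⟨p, by omega⟩
  have hbig : #{v | L < c v} ≤ t - L := by
    simpa only [(hc.1 _).2, and_true] using hc.card_filter_lt_and_le_le_sub hdiam t
  calc k * packingChromatic (sierpinski k n)
      = ∑ _a : Fin k, packingChromatic (sierpinski k n) := by simp
    _ ≤ ∑ a : Fin k, (L + #{u | L < c (Fin.cons a u)}) := sum_le_sum fun a _ =>
        (hc.comap (sierpinskiCons a n) (sierpinskiCons_injective a)).packingChromatic_sierpinski_le
    _ = k * L + #{v | L < c v} := by simp [sum_add_distrib, card_filter_fin_succ]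
    _ ≤ k * L + (t - L) := by gcongr

end IsPackingColoring

lemma cast_add_mul_sub_le_of_mul_le {k X t L : ℕ} (hk : 1 ≤ k) (hX : X ≤ t)
    (h : k * X ≤ k * L + (t - L)) : (X : ℤ) + ((k : ℤ) - 1) * ((X : ℤ) - L) ≤ t := by
  rcases le_total L t with hLt | htL
  · zify [hLt] at h
    linarith
  · rw [Nat.sub_eq_zero_of_le htL, add_zero] at h
    have hXL : X ≤ L := Nat.le_of_mul_le_mul_left h hk
    have : ((k : ℤ) - 1) * ((X : ℤ) - L) ≤ 0 :=
      mul_nonpos_of_nonneg_of_nonpos (by omega) (by omega)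
    omega

theorem packingChromatic_sierpinski_succ_lower_bound_general (k n : ℕ) (hk : 2 ≤ k) :
    (packingChromatic (sierpinski k n) : ℤ) +
        ((k : ℤ) - 1) * ((packingChromatic (sierpinski k n) : ℤ) - 2 ^ (n + 1) + 2) ≤
      (packingChromatic (sierpinski k (n + 1)) : ℤ) := by
  obtain ⟨c, hc⟩ := exists_isPackingColoring_packingChromatic (sierpinski k (n + 1))
  have hmono : packingChromatic (sierpinski k n) ≤ packingChromatic (sierpinski k (n + 1)) :=
    (hc.comap (sierpinskiCons ⟨0, by omega⟩ n) (sierpinskiCons_injective _)).packingChromatic_le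
  have key := cast_add_mul_sub_le_of_mul_le (by omega) hmono hc.mul_packingChromatic_sierpinski_le
  have hL : ((2 ^ (n + 1) - 2 : ℕ) : ℤ) = 2 ^ (n + 1) - 2 := by
    have : 2 ≤ 2 ^ (n + 1) := Nat.le_self_pow n.succ_ne_zero 2
    push_cast [this]
    rfl
  rw [hL] at key
  linarith

/-- For all `k ≥ 2` and `n ≥ 1`, the packing chromatic numbers of consecutive Sierpiński
graphs satisfy `χρ(S^{n+1}_k) ≥ χρ(S^n_k) + (k − 1)·(χρ(S^n_k) − 2^{n+1} + 2)`. -/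
theorem packingChromatic_sierpinski_succ_lower_bound (k n : ℕ) (hk : 2 ≤ k) (hn : 1 ≤ n) :
    (packingChromatic (sierpinski k n) : ℤ) +
        ((k : ℤ) - 1) * ((packingChromatic (sierpinski k n) : ℤ) - 2 ^ (n + 1) + 2) ≤
      (packingChromatic (sierpinski k (n + 1)) : ℤ) :=
  packingChromatic_sierpinski_succ_lower_bound_general k n hk
end

section
/- The packing chromatic number of the graph H′ is at least 4, i.e., H′ admits no 3-packing coloring. -/
/-- The 8-vertex graph `H′` with vertices `x_0, …, x_7` (as `0, …, 7`) and edges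
`x_0x_1, x_1x_2, x_2x_3, x_4x_5, x_5x_6, x_6x_7, x_2x_5`. -/
def graphH' : SimpleGraph (Fin 8) :=
  SimpleGraph.fromRel (fun u v => (u, v) ∈
    [((0 : Fin 8), (1 : Fin 8)), (1, 2), (2, 3), (4, 5), (5, 6), (6, 7), (2, 5)])


instance graphH'.adjDecidable : DecidableRel graphH'.Adj :=
  fun u v => decidable_of_iff' _ (SimpleGraph.fromRel_adj _ u v)

def hPairs : List (Fin 8 × Fin 8 × ℕ) :=
  [(0,1,1), (0,2,2), (0,3,3), (0,4,4), (0,5,3), (0,6,4), (0,7,5), (1,2,1), (1,3,2), (1,4,3), (1,5,2), (1,6,3), (1,7,4), (2,3,1), (2,4,2), (2,5,1), (2,6,2), (2,7,3), (3,4,3), (3,5,2), (3,6,3), (3,7,4), (4,5,1), (4,6,2), (4,7,3), (5,6,1), (5,7,2), (6,7,1)]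

lemma adj01 : graphH'.Adj 0 1 := by decide
lemma adj12 : graphH'.Adj 1 2 := by decide
lemma adj23 : graphH'.Adj 2 3 := by decide
lemma adj25 : graphH'.Adj 2 5 := by decide
lemma adj32 : graphH'.Adj 3 2 := by decide
lemma adj45 : graphH'.Adj 4 5 := by decide
lemma adj54 : graphH'.Adj 5 4 := by decide
lemma adj56 : graphH'.Adj 5 6 := by decide
lemma adj67 : graphH'.Adj 6 7 := by decide

lemma w01 : ∃ p : graphH'.Walk 0 1, p.length = 1 := ⟨(SimpleGraph.Walk.cons adj01 SimpleGraph.Walk.nil), rfl⟩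
lemma w02 : ∃ p : graphH'.Walk 0 2, p.length = 2 := ⟨(SimpleGraph.Walk.cons adj01 (SimpleGraph.Walk.cons adj12 SimpleGraph.Walk.nil)), rfl⟩
lemma w03 : ∃ p : graphH'.Walk 0 3, p.length = 3 := ⟨(SimpleGraph.Walk.cons adj01 (SimpleGraph.Walk.cons adj12 (SimpleGraph.Walk.cons adj23 SimpleGraph.Walk.nil))), rfl⟩
lemma w04 : ∃ p : graphH'.Walk 0 4, p.length = 4 := ⟨(SimpleGraph.Walk.cons adj01 (SimpleGraph.Walk.cons adj12 (SimpleGraph.Walk.cons adj25 (SimpleGraph.Walk.cons adj54 SimpleGraph.Walk.nil)))), rfl⟩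
lemma w05 : ∃ p : graphH'.Walk 0 5, p.length = 3 := ⟨(SimpleGraph.Walk.cons adj01 (SimpleGraph.Walk.cons adj12 (SimpleGraph.Walk.cons adj25 SimpleGraph.Walk.nil))), rfl⟩
lemma w06 : ∃ p : graphH'.Walk 0 6, p.length = 4 := ⟨(SimpleGraph.Walk.cons adj01 (SimpleGraph.Walk.cons adj12 (SimpleGraph.Walk.cons adj25 (SimpleGraph.Walk.cons adj56 SimpleGraph.Walk.nil)))), rfl⟩
lemma w07 : ∃ p : graphH'.Walk 0 7, p.length = 5 := ⟨(SimpleGraph.Walk.cons adj01 (SimpleGraph.Walk.cons adj12 (SimpleGraph.Walk.cons adj25 (SimpleGraph.Walk.cons adj56 (SimpleGraph.Walk.cons adj67 SimpleGraph.Walk.nil))))), rfl⟩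
lemma w12 : ∃ p : graphH'.Walk 1 2, p.length = 1 := ⟨(SimpleGraph.Walk.cons adj12 SimpleGraph.Walk.nil), rfl⟩
lemma w13 : ∃ p : graphH'.Walk 1 3, p.length = 2 := ⟨(SimpleGraph.Walk.cons adj12 (SimpleGraph.Walk.cons adj23 SimpleGraph.Walk.nil)), rfl⟩
lemma w14 : ∃ p : graphH'.Walk 1 4, p.length = 3 := ⟨(SimpleGraph.Walk.cons adj12 (SimpleGraph.Walk.cons adj25 (SimpleGraph.Walk.cons adj54 SimpleGraph.Walk.nil))), rfl⟩
lemma w15 : ∃ p : graphH'.Walk 1 5, p.length = 2 := ⟨(SimpleGraph.Walk.cons adj12 (SimpleGraph.Walk.cons adj25 SimpleGraph.Walk.nil)), rfl⟩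
lemma w16 : ∃ p : graphH'.Walk 1 6, p.length = 3 := ⟨(SimpleGraph.Walk.cons adj12 (SimpleGraph.Walk.cons adj25 (SimpleGraph.Walk.cons adj56 SimpleGraph.Walk.nil))), rfl⟩
lemma w17 : ∃ p : graphH'.Walk 1 7, p.length = 4 := ⟨(SimpleGraph.Walk.cons adj12 (SimpleGraph.Walk.cons adj25 (SimpleGraph.Walk.cons adj56 (SimpleGraph.Walk.cons adj67 SimpleGraph.Walk.nil)))), rfl⟩
lemma w23 : ∃ p : graphH'.Walk 2 3, p.length = 1 := ⟨(SimpleGraph.Walk.cons adj23 SimpleGraph.Walk.nil), rfl⟩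
lemma w24 : ∃ p : graphH'.Walk 2 4, p.length = 2 := ⟨(SimpleGraph.Walk.cons adj25 (SimpleGraph.Walk.cons adj54 SimpleGraph.Walk.nil)), rfl⟩
lemma w25 : ∃ p : graphH'.Walk 2 5, p.length = 1 := ⟨(SimpleGraph.Walk.cons adj25 SimpleGraph.Walk.nil), rfl⟩
lemma w26 : ∃ p : graphH'.Walk 2 6, p.length = 2 := ⟨(SimpleGraph.Walk.cons adj25 (SimpleGraph.Walk.cons adj56 SimpleGraph.Walk.nil)), rfl⟩
lemma w27 : ∃ p : graphH'.Walk 2 7, p.length = 3 := ⟨(SimpleGraph.Walk.cons adj25 (SimpleGraph.Walk.cons adj56 (SimpleGraph.Walk.cons adj67 SimpleGraph.Walk.nil))), rfl⟩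
lemma w34 : ∃ p : graphH'.Walk 3 4, p.length = 3 := ⟨(SimpleGraph.Walk.cons adj32 (SimpleGraph.Walk.cons adj25 (SimpleGraph.Walk.cons adj54 SimpleGraph.Walk.nil))), rfl⟩
lemma w35 : ∃ p : graphH'.Walk 3 5, p.length = 2 := ⟨(SimpleGraph.Walk.cons adj32 (SimpleGraph.Walk.cons adj25 SimpleGraph.Walk.nil)), rfl⟩
lemma w36 : ∃ p : graphH'.Walk 3 6, p.length = 3 := ⟨(SimpleGraph.Walk.cons adj32 (SimpleGraph.Walk.cons adj25 (SimpleGraph.Walk.cons adj56 SimpleGraph.Walk.nil))), rfl⟩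
lemma w37 : ∃ p : graphH'.Walk 3 7, p.length = 4 := ⟨(SimpleGraph.Walk.cons adj32 (SimpleGraph.Walk.cons adj25 (SimpleGraph.Walk.cons adj56 (SimpleGraph.Walk.cons adj67 SimpleGraph.Walk.nil)))), rfl⟩
lemma w45 : ∃ p : graphH'.Walk 4 5, p.length = 1 := ⟨(SimpleGraph.Walk.cons adj45 SimpleGraph.Walk.nil), rfl⟩
lemma w46 : ∃ p : graphH'.Walk 4 6, p.length = 2 := ⟨(SimpleGraph.Walk.cons adj45 (SimpleGraph.Walk.cons adj56 SimpleGraph.Walk.nil)), rfl⟩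
lemma w47 : ∃ p : graphH'.Walk 4 7, p.length = 3 := ⟨(SimpleGraph.Walk.cons adj45 (SimpleGraph.Walk.cons adj56 (SimpleGraph.Walk.cons adj67 SimpleGraph.Walk.nil))), rfl⟩
lemma w56 : ∃ p : graphH'.Walk 5 6, p.length = 1 := ⟨(SimpleGraph.Walk.cons adj56 SimpleGraph.Walk.nil), rfl⟩
lemma w57 : ∃ p : graphH'.Walk 5 7, p.length = 2 := ⟨(SimpleGraph.Walk.cons adj56 (SimpleGraph.Walk.cons adj67 SimpleGraph.Walk.nil)), rfl⟩
lemma w67 : ∃ p : graphH'.Walk 6 7, p.length = 1 := ⟨(SimpleGraph.Walk.cons adj67 SimpleGraph.Walk.nil), rfl⟩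

lemma walks_exist : ∀ x ∈ hPairs, x.1 ≠ x.2.1 ∧ ∃ p : graphH'.Walk x.1 x.2.1, p.length = x.2.2 := by
  intro x hx
  fin_cases hx
  exacts [⟨by decide, w01⟩, ⟨by decide, w02⟩, ⟨by decide, w03⟩, ⟨by decide, w04⟩, ⟨by decide, w05⟩, ⟨by decide, w06⟩, ⟨by decide, w07⟩, ⟨by decide, w12⟩, ⟨by decide, w13⟩, ⟨by decide, w14⟩, ⟨by decide, w15⟩, ⟨by decide, w16⟩, ⟨by decide, w17⟩, ⟨by decide, w23⟩, ⟨by decide, w24⟩, ⟨by decide, w25⟩, ⟨by decide, w26⟩, ⟨by decide, w27⟩, ⟨by decide, w34⟩, ⟨by decide, w35⟩, ⟨by decide, w36⟩, ⟨by decide, w37⟩, ⟨by decide, w45⟩, ⟨by decide, w46⟩, ⟨by decide, w47⟩, ⟨by decide, w56⟩, ⟨by decide, w57⟩, ⟨by decide, w67⟩]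

set_option maxRecDepth 8000 in
set_option maxHeartbeats 1000000 in
set_option synthInstance.maxHeartbeats 1000000 in
set_option synthInstance.maxSize 2000 in
lemma key8 : ∀ a0 a1 a2 a3 a4 a5 a6 a7 : Fin 3,
    (a0 = a1 ∧ 1 ≤ (a0 : ℕ) + 1) ∨
    (a0 = a2 ∧ 2 ≤ (a0 : ℕ) + 1) ∨
    (a0 = a3 ∧ 3 ≤ (a0 : ℕ) + 1) ∨
    (a0 = a4 ∧ 4 ≤ (a0 : ℕ) + 1) ∨
    (a0 = a5 ∧ 3 ≤ (a0 : ℕ) + 1) ∨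
    (a0 = a6 ∧ 4 ≤ (a0 : ℕ) + 1) ∨
    (a0 = a7 ∧ 5 ≤ (a0 : ℕ) + 1) ∨
    (a1 = a2 ∧ 1 ≤ (a1 : ℕ) + 1) ∨
    (a1 = a3 ∧ 2 ≤ (a1 : ℕ) + 1) ∨
    (a1 = a4 ∧ 3 ≤ (a1 : ℕ) + 1) ∨
    (a1 = a5 ∧ 2 ≤ (a1 : ℕ) + 1) ∨
    (a1 = a6 ∧ 3 ≤ (a1 : ℕ) + 1) ∨
    (a1 = a7 ∧ 4 ≤ (a1 : ℕ) + 1) ∨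
    (a2 = a3 ∧ 1 ≤ (a2 : ℕ) + 1) ∨
    (a2 = a4 ∧ 2 ≤ (a2 : ℕ) + 1) ∨
    (a2 = a5 ∧ 1 ≤ (a2 : ℕ) + 1) ∨
    (a2 = a6 ∧ 2 ≤ (a2 : ℕ) + 1) ∨
    (a2 = a7 ∧ 3 ≤ (a2 : ℕ) + 1) ∨
    (a3 = a4 ∧ 3 ≤ (a3 : ℕ) + 1) ∨
    (a3 = a5 ∧ 2 ≤ (a3 : ℕ) + 1) ∨
    (a3 = a6 ∧ 3 ≤ (a3 : ℕ) + 1) ∨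
    (a3 = a7 ∧ 4 ≤ (a3 : ℕ) + 1) ∨
    (a4 = a5 ∧ 1 ≤ (a4 : ℕ) + 1) ∨
    (a4 = a6 ∧ 2 ≤ (a4 : ℕ) + 1) ∨
    (a4 = a7 ∧ 3 ≤ (a4 : ℕ) + 1) ∨
    (a5 = a6 ∧ 1 ≤ (a5 : ℕ) + 1) ∨
    (a5 = a7 ∧ 2 ≤ (a5 : ℕ) + 1) ∨
    (a6 = a7 ∧ 1 ≤ (a6 : ℕ) + 1) := by decide

lemma key : ∀ f : Fin 8 → Fin 3,
    ∃ x ∈ hPairs, f x.1 = f x.2.1 ∧ x.2.2 ≤ (f x.1 : ℕ) + 1 := by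
  intro f
  rcases key8 (f 0) (f 1) (f 2) (f 3) (f 4) (f 5) (f 6) (f 7) with h|h|h|h|h|h|h|h|h|h|h|h|h|h|h|h|h|h|h|h|h|h|h|h|h|h|h|h
  exacts [⟨(0,1,1), by decide, h.1, h.2⟩, ⟨(0,2,2), by decide, h.1, h.2⟩, ⟨(0,3,3), by decide, h.1, h.2⟩, ⟨(0,4,4), by decide, h.1, h.2⟩, ⟨(0,5,3), by decide, h.1, h.2⟩, ⟨(0,6,4), by decide, h.1, h.2⟩, ⟨(0,7,5), by decide, h.1, h.2⟩, ⟨(1,2,1), by decide, h.1, h.2⟩, ⟨(1,3,2), by decide, h.1, h.2⟩, ⟨(1,4,3), by decide, h.1, h.2⟩, ⟨(1,5,2), by decide, h.1, h.2⟩, ⟨(1,6,3), by decide, h.1, h.2⟩, ⟨(1,7,4), by decide, h.1, h.2⟩, ⟨(2,3,1), by decide, h.1, h.2⟩, ⟨(2,4,2), by decide, h.1, h.2⟩, ⟨(2,5,1), by decide, h.1, h.2⟩, ⟨(2,6,2), by decide, h.1, h.2⟩, ⟨(2,7,3), by decide, h.1, h.2⟩, ⟨(3,4,3), by decide, h.1,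 h.2⟩, ⟨(3,5,2), by decide, h.1, h.2⟩, ⟨(3,6,3), by decide, h.1, h.2⟩, ⟨(3,7,4), by decide, h.1, h.2⟩, ⟨(4,5,1), by decide, h.1, h.2⟩, ⟨(4,6,2), by decide, h.1, h.2⟩, ⟨(4,7,3), by decide, h.1, h.2⟩, ⟨(5,6,1), by decide, h.1, h.2⟩, ⟨(5,7,2), by decide, h.1, h.2⟩, ⟨(6,7,1), by decide, h.1, h.2⟩]

lemma no3coloring : ¬ ∃ c : Fin 8 → ℕ, IsPackingColoring graphH' 3 c := by
  rintro ⟨c, hc1, hc2⟩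
  set f : Fin 8 → Fin 3 := fun v => ⟨c v - 1, by have := hc1 v; omega⟩ with hf
  obtain ⟨x, hx, hfeq, hlen⟩ := key f
  obtain ⟨hne, p, hp⟩ := walks_exist x hx
  have hcv : ∀ v, (f v : ℕ) + 1 = c v := fun v => by
    have := hc1 v; simp [hf]; omega
  have hceq : c x.1 = c x.2.1 := by
    have h2 : ((f x.1 : ℕ)) = (f x.2.1 : ℕ) := congrArg Fin.val hfeq
    rw [← hcv x.1, ← hcv x.2.1, h2]
  have := hc2 x.1 x.2.1 hne hceq p
  rw [hp, ← hcv x.1] at this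
  omega

/-- The packing chromatic number of the graph `H′` is at least 4; that is, `H′` admits no
`3`-packing coloring. -/
theorem packingChromatic_graphH'_ge_four :
    4 ≤ packingChromatic graphH' ∧ ¬ ∃ c : Fin 8 → ℕ, IsPackingColoring graphH' 3 c := by
  refine ⟨?_, no3coloring⟩
  by_contra h
  push_neg at h
  have h3 : packingChromatic graphH' ≤ 3 := by omega
  have hmem : packingChromatic graphH' ∈ {t | ∃ c : Fin 8 → ℕ, IsPackingColoring graphH' t c} := by
    apply Nat.sInf_mem
    refine ⟨8, fun v => (v : ℕ) + 1, fun v => ⟨Nat.le_add_left 1 _, Nat.succ_le_of_lt v.isLt⟩,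
      fun u v hne hcuv => absurd (Fin.val_injective (Nat.succ_injective hcuv)) hne⟩
  obtain ⟨c, hc1, hc2⟩ := hmem
  exact no3coloring ⟨c, fun v => ⟨(hc1 v).1, le_trans (hc1 v).2 h3⟩, hc2⟩
end

section
/- For the Sierpiński triangle graphs: χρ(ST^0_3) = 3, χρ(ST^1_3) = 4, and χρ(ST^2_3) = 8. -/
/-- The relation on the vertices of `S^{n+1}_3` relating the endpoints of the non-clique
edges, i.e. the edges of the form `{w i j j … j, w j i i … i}` with `i ≠ j` (those whose
branching index is not the last index, so they have a nonempty constant suffix). -/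
def nonCliqueRel (n : ℕ) (u v : Fin (n + 1) → Fin 3) : Prop :=
  ∃ i : Fin (n + 1), (i : ℕ) < n ∧ (∀ j, j < i → u j = v j) ∧ u i ≠ v i ∧
    ∀ j, i < j → u j = v i ∧ v j = u i

/-- The setoid on the vertices of `S^{n+1}_3` generated by identifying the two endpoints
of every non-clique edge. -/
def STSetoid (n : ℕ) : Setoid (Fin (n + 1) → Fin 3) :=
  Relation.EqvGen.setoid (nonCliqueRel n)

/-- The Sierpiński triangle graph `ST^n_3`, obtained from `S^{n+1}_3` by contracting all
non-clique edges: the vertices are the equivalence classes, and two distinct classes are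
adjacent iff they contain representatives adjacent in `S^{n+1}_3`. -/
def sierpinskiTriangle (n : ℕ) : SimpleGraph (Quotient (STSetoid n)) where
  Adj x y := x ≠ y ∧ ∃ u v : Fin (n + 1) → Fin 3,
    Quotient.mk (STSetoid n) u = x ∧ Quotient.mk (STSetoid n) v = y ∧
      (sierpinski 3 (n + 1)).Adj u v
  symm := by
    constructor
    rintro x y ⟨hxy, u, v, hu, hv, h⟩
    exact ⟨hxy.symm, v, u, hv, hu, h.symm⟩
  loopless := by
    constructor
    rintro x ⟨h, -⟩
    exact h rfl

/-!
For `n ≤ 2` every lattice point of the triangle of side `2ⁿ` is a vertex of `ST^n_3`, so the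
graph can be modelled on `Fin N` with a distance matrix that is certified by checking that it
vanishes exactly on the diagonal, is `1`-Lipschitz along edges and decreases along some edge.
The upper bounds are explicit packing colourings. For the lower bounds, if all distances are at
most `k + 1`, then each colour above `k` is used at most once, so a `t`-packing colouring colours
all but at most `t - k` vertices with the colours `1, …, k`; an exhaustive search over such
partial colourings shows that this is impossible for `(k, t) = (0, 2), (1, 3), (3, 7)`.
-/

open SimpleGraph

section PackingColoring

variable {V W : Type*} {G : SimpleGraph V} {H : SimpleGraph W}

theorem IsPackingColoring.mono {t t' : ℕ} {c : V → ℕ} (h : t ≤ t')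
    (hc : IsPackingColoring G t c) : IsPackingColoring G t' c :=
  ⟨fun v => ⟨(hc.1 v).1, (hc.1 v).2.trans h⟩, hc.2⟩

theorem packingChromatic_eq_succ {m : ℕ} {c : V → ℕ} (hc : IsPackingColoring G (m + 1) c)
    (h : ∀ c, ¬IsPackingColoring G m c) : packingChromatic G = m + 1 := by
  refine le_antisymm (Nat.sInf_le ⟨c, hc⟩) (le_csInf ⟨m + 1, c, hc⟩ ?_)
  rintro t ⟨c', hc'⟩
  by_contra! ht
  exact h c' (hc'.mono (by omega))

theorem IsPackingColoring.comp_iso (e : G ≃g H) {t : ℕ} {c : W → ℕ}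
    (hc : IsPackingColoring H t c) : IsPackingColoring G t (c ∘ e) := by
  refine ⟨fun v => hc.1 (e v), fun u v huv hcuv p => ?_⟩
  simpa using hc.2 (e u) (e v) (e.injective.ne huv) hcuv (p.map e.toHom)

theorem packingChromatic_congr (e : G ≃g H) : packingChromatic G = packingChromatic H := by
  unfold packingChromatic
  congr 1
  ext t
  exact ⟨fun ⟨c, hc⟩ => ⟨c ∘ e.symm, hc.comp_iso e.symm⟩, fun ⟨c, hc⟩ => ⟨c ∘ e, hc.comp_iso e⟩⟩

end PackingColoring

section DistTable

variable {V : Type*} {G : SimpleGraph V} {D : V → V → ℕ}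

structure IsDistTable (G : SimpleGraph V) (D : V → V → ℕ) : Prop where
  self : ∀ v, D v v = 0
  le_succ_of_adj : ∀ u w v, G.Adj u w → D u v ≤ D w v + 1
  exists_adj_of_ne : ∀ u v, u ≠ v → ∃ w, G.Adj u w ∧ D w v + 1 = D u v

namespace IsDistTable

theorem le_length (hD : IsDistTable G D) {u v : V} (p : G.Walk u v) : D u v ≤ p.length := by
  induction p with
  | nil => simp [hD.self]
  | cons h _ ih =>
    rw [Walk.length_cons]
    exact (hD.le_succ_of_adj _ _ _ h).trans (by omega)

theorem exists_walk (hD : IsDistTable G D) (u v : V) : ∃ p : G.Walk u v, p.length = D u v := by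
  induction hn : D u v generalizing u with
  | zero =>
    obtain rfl : u = v := by
      by_contra huv
      obtain ⟨w, -, hw⟩ := hD.exists_adj_of_ne u v huv
      omega
    exact ⟨.nil, rfl⟩
  | succ m ih =>
    have huv : u ≠ v := by
      rintro rfl
      simp [hD.self] at hn
    obtain ⟨w, huw, hw⟩ := hD.exists_adj_of_ne u v huv
    obtain ⟨p, hp⟩ := ih w (by omega)
    exact ⟨.cons huw p, by simp [hp]⟩

theorem isPackingColoring_iff (hD : IsDistTable G D) {t : ℕ} {c : V → ℕ} :
    IsPackingColoring G t c ↔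
      (∀ v, 1 ≤ c v ∧ c v ≤ t) ∧ ∀ u v, u ≠ v → c u = c v → c u < D u v := by
  refine and_congr_right fun _ => forall₂_congr fun u v => imp_congr_right fun _ =>
    imp_congr_right fun _ => ⟨fun h => ?_, fun h p => h.trans_le (hD.le_length p)⟩
  obtain ⟨p, hp⟩ := hD.exists_walk u v
  exact hp ▸ h p

end IsDistTable

end DistTable

section Search

variable {V : Type*} (D : V → V → ℕ) (k : ℕ)

def fits (v : V) (j : ℕ) (done : List (V × ℕ)) : Bool :=
  done.all fun p => p.2 != j || decide (j < D p.1 v)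

/-- Whether the vertices `vs` can be coloured with the colours `1, …, k`, leaving out at most `b`
of them, consistently with the partial colouring `done` and the packing condition for `D`. -/
def search : List V → ℕ → List (V × ℕ) → Bool
  | [], _, _ => true
  | v :: vs, b, done =>
    (decide (0 < b) && search vs (b - 1) done) ||
      (List.range' 1 k).any fun j => fits D v j done && search vs b ((v, j) :: done)

variable {D k}

theorem search_eq_true {c : V → ℕ} (hc : ∀ u v, u ≠ v → c u = c v → c u < D u v)
    (hpos : ∀ v, 1 ≤ c v) :
    ∀ (vs : List V) (b : ℕ) (done : List (V × ℕ)), vs.Nodup →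
      (∀ p ∈ done, p.2 = c p.1 ∧ p.1 ∉ vs) → vs.countP (fun v => k < c v) ≤ b →
      search D k vs b done = true
  | [], _, _, _, _, _ => rfl
  | v :: vs, b, done, hnd, hdone, hb => by
    rw [List.nodup_cons] at hnd
    have hdone' : ∀ p ∈ done, p.2 = c p.1 ∧ p.1 ∉ vs := fun p hp =>
      ⟨(hdone p hp).1, fun h => (hdone p hp).2 (List.mem_cons_of_mem v h)⟩
    by_cases hv : k < c v
    · rw [List.countP_cons_of_pos (by simpa using hv)] at hb
      have hrec := search_eq_true hc hpos vs (b - 1) done hnd.2 hdone' (by omega)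
      simp [search, hrec, show 0 < b by omega]
    · rw [List.countP_cons_of_neg (by simpa using hv)] at hb
      have hfits : fits D v (c v) done = true := by
        simp only [fits, List.all_eq_true, Bool.or_eq_true, bne_iff_ne, decide_eq_true_eq]
        intro p hp
        obtain ⟨hp2, hp1⟩ := hdone p hp
        refine or_iff_not_imp_left.2 fun h => ?_
        rw [not_not, hp2] at h
        exact h ▸ hc p.1 v (fun h' => hp1 (h' ▸ List.mem_cons_self)) h
      have hrec := search_eq_true hc hpos vs b ((v, c v) :: done) hnd.2
        (fun p hp => by
          rcases List.mem_cons.1 hp with rfl | hp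
          · exact ⟨rfl, hnd.1⟩
          · exact hdone' p hp)
        hb
      simp only [search, Bool.or_eq_true, List.any_eq_true, Bool.and_eq_true, List.mem_range'_1]
      exact Or.inr ⟨c v, ⟨hpos v, by omega⟩, hfits, hrec⟩

-- A colour above `k` is at least every distance, so it is used at most once.
theorem countP_lt_le_sub {t : ℕ} {c : V → ℕ} (hc : ∀ u v, u ≠ v → c u = c v → c u < D u v)
    (hdiam : ∀ u v, D u v ≤ k + 1) (ht : ∀ v, c v ≤ t) {vs : List V} (hnd : vs.Nodup) :
    vs.countP (fun v => k < c v) ≤ t - k := by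
  set large := vs.filter fun v => k < c v
  have hinj : (large.map c).Nodup := (hnd.filter _).map_on fun u hu v hv huv => by
    by_contra h
    have := hc u v h huv
    have := hdiam u v
    simp only [large, List.mem_filter, decide_eq_true_eq] at hu
    omega
  calc vs.countP (fun v => k < c v) = (large.map c).toFinset.card := by
        rw [List.toFinset_card_of_nodup hinj, List.length_map, List.countP_eq_length_filter]
    _ ≤ (Finset.Ioc k t).card := Finset.card_le_card fun j hj => by
        simp only [List.mem_toFinset, List.mem_map, large, List.mem_filter,
          decide_eq_true_eq] at hj
        obtain ⟨v, ⟨-, hv⟩, rfl⟩ := hj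
        exact Finset.mem_Ioc.2 ⟨hv, ht v⟩
    _ = t - k := Nat.card_Ioc k t

theorem IsDistTable.not_isPackingColoring {G : SimpleGraph V} (hD : IsDistTable G D)
    (hdiam : ∀ u v, D u v ≤ k + 1) {vs : List V} (hnd : vs.Nodup) {t : ℕ}
    (hs : search D k vs (t - k) [] = false) (c : V → ℕ) : ¬IsPackingColoring G t c := by
  rw [hD.isPackingColoring_iff]
  rintro ⟨hbound, hc⟩
  have := search_eq_true hc (fun v => (hbound v).1) vs (t - k) [] hnd (by simp)
    (countP_lt_le_sub hc hdiam (fun v => (hbound v).2) hnd)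
  simp [hs] at this

end Search

section SierpinskiTriangle

instance {k n : ℕ} (G : SimpleGraph (Fin k)) [DecidableRel G.Adj] :
    DecidableRel (genSierpinski G n).Adj := fun u v =>
  inferInstanceAs (Decidable (∃ i : Fin n,
    (∀ j, j < i → u j = v j) ∧ G.Adj (u i) (v i) ∧ ∀ j, i < j → u j = v i ∧ v j = u i))

instance (k n : ℕ) : DecidableRel (sierpinski k n).Adj :=
  inferInstanceAs (DecidableRel (genSierpinski (⊤ : SimpleGraph (Fin k)) n).Adj)

instance (n : ℕ) : DecidableRel (nonCliqueRel n) := fun u v =>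
  inferInstanceAs (Decidable (∃ i : Fin (n + 1), (i : ℕ) < n ∧ (∀ j, j < i → u j = v j) ∧
    u i ≠ v i ∧ ∀ j, i < j → u j = v i ∧ v j = u i))

variable {n : ℕ} {W : Type*} {G : SimpleGraph W}

theorem mk_eq_mk_iff_of_ker {φ : (Fin (n + 1) → Fin 3) → W}
    (hrel : ∀ u v, nonCliqueRel n u v → φ u = φ v)
    (hker : ∀ u v, φ u = φ v → u = v ∨ nonCliqueRel n u v) {u v : Fin (n + 1) → Fin 3} :
    Quotient.mk (STSetoid n) u = Quotient.mk (STSetoid n) v ↔ φ u = φ v := by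
  rw [Quotient.eq]
  constructor
  · intro h
    induction h with
    | rel _ _ h => exact hrel _ _ h
    | refl => rfl
    | symm _ _ _ ih => exact ih.symm
    | trans _ _ _ _ _ ih₁ ih₂ => exact ih₁.trans ih₂
  · intro h
    rcases hker u v h with rfl | h
    · exact Relation.EqvGen.refl u
    · exact Relation.EqvGen.rel u v h

noncomputable def sierpinskiTriangleIso (φ : (Fin (n + 1) → Fin 3) → W)
    (hrel : ∀ u v, nonCliqueRel n u v → φ u = φ v)
    (hker : ∀ u v, φ u = φ v → u = v ∨ nonCliqueRel n u v)
    (hsurj : Function.Surjective φ)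
    (hadj : ∀ u v, (sierpinski 3 (n + 1)).Adj u v → φ u ≠ φ v → G.Adj (φ u) (φ v))
    (hlift : ∀ a b, G.Adj a b → ∃ u v, φ u = a ∧ φ v = b ∧ (sierpinski 3 (n + 1)).Adj u v) :
    sierpinskiTriangle n ≃g G where
  toEquiv := Equiv.ofBijective
    (Quotient.lift φ fun _ _ h => (mk_eq_mk_iff_of_ker hrel hker).1 (Quotient.sound h))
    ⟨fun x y => Quotient.inductionOn₂ x y fun _ _ h => (mk_eq_mk_iff_of_ker hrel hker).2 h,
      fun a => (hsurj a).elim fun u hu => ⟨Quotient.mk _ u, hu⟩⟩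
  map_rel_iff' := by
    intro x y
    induction x using Quotient.inductionOn with | _ u =>
    induction y using Quotient.inductionOn with | _ v =>
    change G.Adj (φ u) (φ v) ↔ _ ∧ _
    simp only [ne_eq, mk_eq_mk_iff_of_ker hrel hker]
    constructor
    · intro h
      exact ⟨G.ne_of_adj h, hlift _ _ h⟩
    · rintro ⟨hne, u', v', hu, hv, h⟩
      rw [← hu, ← hv] at hne ⊢
      exact hadj u' v' h hne

end SierpinskiTriangle

section Models

/-- The word `u` stands for the lattice point `∑ᵢ 2^(n-1-i) e_{u i}` of the triangle of side `2ⁿ`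
spanned by `e₀, e₁, e₂` (the last two letters both get weight `1` because of truncated
subtraction), numbered row by row from the corner `e₀`. -/
def latticeIndex (N n : ℕ) [NeZero N] (u : Fin (n + 1) → Fin 3) : Fin N :=
  let coord (j : Fin 3) : ℕ :=
    (((List.finRange (n + 1)).filter fun i => u i = j).map fun i => 2 ^ (n - 1 - i)).sum
  let row := coord 1 + coord 2
  Fin.ofNat N (row * (row + 1) / 2 + coord 2)

def tableDist (T : List (List ℕ)) (a b : ℕ) : ℕ := (T.getD a []).getD b 0

def tableGraph (N : ℕ) (T : List (List ℕ)) : SimpleGraph (Fin N) :=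
  SimpleGraph.fromRel fun a b => tableDist T a b = 1

instance (N : ℕ) (T : List (List ℕ)) : DecidableRel (tableGraph N T).Adj :=
  inferInstanceAs (DecidableRel (SimpleGraph.fromRel fun a b : Fin N => tableDist T a b = 1).Adj)

-- The distance matrices of `ST^0_3`, `ST^1_3`, `ST^2_3` in the numbering of `latticeIndex`.
def distST₀ : List (List ℕ) := [[0, 1, 1], [1, 0, 1], [1, 1, 0]]

def distST₁ : List (List ℕ) :=
  [[0, 1, 1, 2, 2, 2], [1, 0, 1, 1, 1, 2], [1, 1, 0, 2, 1, 1], [2, 1, 2, 0, 1, 2],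
    [2, 1, 1, 1, 0, 1], [2, 2, 1, 2, 1, 0]]

def distST₂ : List (List ℕ) :=
  [[0, 1, 1, 2, 2, 2, 3, 3, 3, 3, 4, 4, 4, 4, 4], [1, 0, 1, 1, 1, 2, 2, 2, 3, 3, 3, 3, 3, 4, 4],
    [1, 1, 0, 2, 1, 1, 3, 3, 2, 2, 4, 4, 3, 3, 3], [2, 1, 2, 0, 1, 2, 1, 1, 3, 3, 2, 2, 2, 3, 4],
    [2, 1, 1, 1, 0, 1, 2, 2, 2, 2, 3, 3, 3, 3, 3], [2, 2, 1, 2, 1, 0, 3, 3, 1, 1, 4, 3, 2, 2, 2],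
    [3, 2, 3, 1, 2, 3, 0, 1, 3, 4, 1, 1, 2, 3, 4], [3, 2, 3, 1, 2, 3, 1, 0, 2, 3, 2, 1, 1, 2, 3],
    [3, 3, 2, 3, 2, 1, 3, 2, 0, 1, 3, 2, 1, 1, 2], [3, 3, 2, 3, 2, 1, 4, 3, 1, 0, 4, 3, 2, 1, 1],
    [4, 3, 4, 2, 3, 4, 1, 2, 3, 4, 0, 1, 2, 3, 4], [4, 3, 4, 2, 3, 3, 1, 1, 2, 3, 1, 0, 1, 2, 3],
    [4, 3, 3, 2, 3, 2, 2, 1, 1, 2, 2, 1, 0, 1, 2], [4, 4, 3, 3, 3, 2, 3, 2, 1, 1, 3, 2, 1, 0, 1],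
    [4, 4, 3, 4, 3, 2, 4, 3, 2, 1, 4, 3, 2, 1, 0]]

theorem isDistTable_distST₀ :
    IsDistTable (tableGraph 3 distST₀) fun a b => tableDist distST₀ a b :=
  ⟨by decide, by decide, by decide⟩

theorem isDistTable_distST₁ :
    IsDistTable (tableGraph 6 distST₁) fun a b => tableDist distST₁ a b :=
  ⟨by decide, by decide, by decide⟩

theorem isDistTable_distST₂ :
    IsDistTable (tableGraph 15 distST₂) fun a b => tableDist distST₂ a b :=
  ⟨by decide +kernel, by decide +kernel, by decide +kernel⟩

noncomputable def isoST₀ : sierpinskiTriangle 0 ≃g tableGraph 3 distST₀ :=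
  sierpinskiTriangleIso (latticeIndex 3 0) (by decide +kernel) (by decide +kernel)
    (by decide +kernel) (by decide +kernel) (by decide +kernel)

noncomputable def isoST₁ : sierpinskiTriangle 1 ≃g tableGraph 6 distST₁ :=
  sierpinskiTriangleIso (latticeIndex 6 1) (by decide +kernel) (by decide +kernel)
    (by decide +kernel) (by decide +kernel) (by decide +kernel)

noncomputable def isoST₂ : sierpinskiTriangle 2 ≃g tableGraph 15 distST₂ :=
  sierpinskiTriangleIso (latticeIndex 15 2) (by decide +kernel) (by decide +kernel)
    (by decide +kernel) (by decide +kernel) (by decide +kernel)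

end Models

theorem packingChromatic_sierpinskiTriangle_zero :
    packingChromatic (sierpinskiTriangle 0) = 3 := by
  rw [packingChromatic_congr isoST₀]
  refine packingChromatic_eq_succ (c := ![1, 2, 3]) ?_
    (isDistTable_distST₀.not_isPackingColoring (k := 0) (by decide) (List.nodup_finRange 3)
      (by decide +kernel))
  rw [isDistTable_distST₀.isPackingColoring_iff]
  decide

theorem packingChromatic_sierpinskiTriangle_one :
    packingChromatic (sierpinskiTriangle 1) = 4 := by
  rw [packingChromatic_congr isoST₁]
  refine packingChromatic_eq_succ (c := ![1, 2, 3, 1, 4, 1]) ?_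
    (isDistTable_distST₁.not_isPackingColoring (k := 1) (by decide) (List.nodup_finRange 6)
      (by decide +kernel))
  rw [isDistTable_distST₁.isPackingColoring_iff]
  decide

theorem packingChromatic_sierpinskiTriangle_two :
    packingChromatic (sierpinskiTriangle 2) = 8 := by
  rw [packingChromatic_congr isoST₂]
  refine packingChromatic_eq_succ (c := ![1, 2, 3, 1, 4, 1, 5, 6, 2, 7, 1, 3, 1, 8, 1]) ?_
    (isDistTable_distST₂.not_isPackingColoring (k := 3) (by decide +kernel)
      (List.nodup_finRange 15) (by decide +kernel))
  rw [isDistTable_distST₂.isPackingColoring_iff]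
  decide +kernel

/-- `χρ(ST^0_3) = 3`, `χρ(ST^1_3) = 4` and `χρ(ST^2_3) = 8`. -/
theorem packingChromatic_sierpinskiTriangle_small :
    packingChromatic (sierpinskiTriangle 0) = 3 ∧
    packingChromatic (sierpinskiTriangle 1) = 4 ∧
    packingChromatic (sierpinskiTriangle 2) = 8 :=
  ⟨packingChromatic_sierpinskiTriangle_zero, packingChromatic_sierpinskiTriangle_one,
    packingChromatic_sierpinskiTriangle_two⟩
end
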